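/- Let m,n ≥ 1 be integers. The commutator subgroup of the structure group of the quandle U_{m,n} is a cyclic group of order gcd(m,n), i.e. isomorphic to ℤ/gcd(m,n). -/

import Mathlib

/-!
Write `x_u`, `y_v` for the generators of `G = G(U_{m,n})` coming from the two summands. All `x_u`
conjugate `y_v` to the same `y_{v+1}`, so `x_u x_{u'}⁻¹` commutes with every `y_v`, and
`⁅x_u, y_v⁆ = y_v (x_{u+1} x_u⁻¹) y_v⁻¹ = x_{u+1} x_u⁻¹` does not depend on `v`; symmetrically it
does not depend on `u`. This single commutator `z` is central and the generators commute modulo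
`z`, so `[G, G] = ⟨z⟩`. From `x_{u+1} = z x_u` we get `z^m = 1`, and likewise `z^n = 1`. The order
of `z` is exactly `gcd(m, n)`: `x_u ↦ [[1, 1, u], [0, 1, 0], [0, 0, 1]]`,
`y_v ↦ [[1, 0, -v], [0, 1, 1], [0, 0, 1]]` defines a map to the Heisenberg group over
`ℤ/gcd(m, n)` sending `z` to a central element of that order.
-/

variable {X : Type*}

/-- The relators `g_a g_b (g_b g_{a ◁ b})⁻¹` of the structure group. -/
def structureRels (op : X → X → X) : Set (FreeGroup X) :=
  {w | ∃ a b : X,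
    w = FreeGroup.of a * FreeGroup.of b * (FreeGroup.of b * FreeGroup.of (op a b))⁻¹}

/-- The structure group `⟨g_a, a ∈ X | g_a g_b = g_b g_{a ◁ b}⟩` of a quandle. -/
abbrev StructureGroup (op : X → X → X) : Type _ := PresentedGroup (structureRels op)

/-- The quandle `U_{n_1,…,n_r}` on `ℤ/n_1 ⊔ ⋯ ⊔ ℤ/n_r`: `a ◁ b = a` if `a, b` lie in
the same summand and `a ◁ b = a + 1` otherwise. -/
def Uop {r : ℕ} (n : Fin r → ℕ) :
    (Σ i, ZMod (n i)) → (Σ i, ZMod (n i)) → (Σ i, ZMod (n i)) :=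
  fun a b => if a.1 = b.1 then a else ⟨a.1, a.2 + 1⟩

open Subgroup
open scoped commutatorElement

section

variable {G : Type*} [Group G]

theorem Subgroup.mem_center_of_closure_eq_top {S : Set G} (hS : closure S = ⊤) {z : G}
    (hz : ∀ s ∈ S, Commute s z) : z ∈ center G := by
  rw [← centralizer_univ, ← coe_top, ← hS, centralizer_closure]
  exact mem_centralizer_iff.2 fun s hs => (hz s hs).eq

theorem Subgroup.normal_zpowers_of_mem_center {z : G} (hz : z ∈ center G) :
    (zpowers z).Normal where
  conj_mem a ha g := by
    rw [mem_center_iff.1 (zpowers_le.2 hz ha) g, mul_inv_cancel_right]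
    exact ha

theorem Subgroup.commutator_le_of_closure_eq_top {S : Set G} (hS : closure S = ⊤)
    {N : Subgroup G} [N.Normal] (h : ∀ a ∈ S, ∀ b ∈ S, ⁅a, b⁆ ∈ N) : _root_.commutator G ≤ N := by
  rw [← Normal.quotient_commutative_iff_commutator_le]
  set π := QuotientGroup.mk' N
  have hT : closure (π '' S) = ⊤ := by
    rw [← MonoidHom.map_closure, hS, ← MonoidHom.range_eq_map, QuotientGroup.range_mk']
  have hTT : π '' S ⊆ centralizer (π '' S) := by
    rintro _ ⟨b, hb, rfl⟩ _ ⟨a, ha, rfl⟩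
    rw [← commutatorElement_eq_one_iff_mul_comm, ← map_commutatorElement,
      QuotientGroup.mk'_apply, QuotientGroup.eq_one_iff]
    exact h a ha b hb
  have hc : ⊤ ≤ centralizer (closure (π '' S) : Set (G ⧸ N)) := by
    rw [centralizer_closure, ← hT]
    exact (closure_le _).2 hTT
  rw [hT] at hc
  exact ⟨⟨fun p q => mem_centralizer_iff.1 (hc (mem_top q)) p trivial⟩⟩

end

/-- The defining relations of `G(U_{m,n})`, for `x u` and `y v` in place of the generators
`g_⟨0, u⟩` and `g_⟨1, v⟩` of the two summands. -/
structure IsUmnPair {G : Type*} [Group G] {m n : ℕ} (x : ZMod m → G) (y : ZMod n → G) : Prop where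
  commute_fst : ∀ u u', Commute (x u) (x u')
  commute_snd : ∀ v v', Commute (y v) (y v')
  fst_mul_snd : ∀ u v, x u * y v = y v * x (u + 1)
  snd_mul_fst : ∀ u v, y v * x u = x u * y (v + 1)

namespace IsUmnPair

variable {G : Type*} [Group G] {m n : ℕ} {x : ZMod m → G} {y : ZMod n → G}

theorem symm (h : IsUmnPair x y) : IsUmnPair y x :=
  ⟨h.commute_snd, h.commute_fst, fun v u => h.snd_mul_fst u v, fun u v => h.fst_mul_snd v u⟩

theorem commute_mul_inv_snd (h : IsUmnPair x y) (u u' : ZMod m) (v : ZMod n) :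
    Commute (x u * (x u')⁻¹) (y v) :=
  SemiconjBy.mul_left (h.snd_mul_fst u v).symm
    (SemiconjBy.inv_symm_left (h.snd_mul_fst u' v).symm)

theorem commutatorElement_eq_mul_inv (h : IsUmnPair x y) (u : ZMod m) (v : ZMod n) :
    ⁅x u, y v⁆ = x (u + 1) * (x u)⁻¹ :=
  calc ⁅x u, y v⁆ = y v * (x (u + 1) * (x u)⁻¹) * (y v)⁻¹ := by
        rw [commutatorElement_def, h.fst_mul_snd]; group
    _ = x (u + 1) * (x u)⁻¹ := (h.commute_mul_inv_snd (u + 1) u v).symm.mul_inv_cancel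

/-- `⁅x u, y v⁆ = x (u + 1) * (x u)⁻¹` does not depend on `v`, and symmetrically
`⁅y v, x u⁆` does not depend on `u`. -/
theorem commutatorElement_eq (h : IsUmnPair x y) (u : ZMod m) (v : ZMod n) :
    ⁅x u, y v⁆ = ⁅x 0, y 0⁆ :=
  calc ⁅x u, y v⁆ = ⁅y 0, x u⁆⁻¹ := by
        rw [h.commutatorElement_eq_mul_inv, ← h.commutatorElement_eq_mul_inv u 0,
          commutatorElement_inv]
    _ = ⁅x 0, y 0⁆ := by
        rw [h.symm.commutatorElement_eq_mul_inv, ← h.symm.commutatorElement_eq_mul_inv 0 0,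
          commutatorElement_inv]

theorem fst_add_one (h : IsUmnPair x y) (u : ZMod m) : x (u + 1) = ⁅x 0, y 0⁆ * x u := by
  rw [← h.commutatorElement_eq u 0, h.commutatorElement_eq_mul_inv, inv_mul_cancel_right]

theorem fst_add_natCast (h : IsUmnPair x y) (u : ZMod m) (k : ℕ) :
    x (u + k) = ⁅x 0, y 0⁆ ^ k * x u := by
  induction k with
  | zero => simp
  | succ k ih => rw [Nat.cast_succ, ← add_assoc, h.fst_add_one, ih, pow_succ', mul_assoc]

theorem pow_fst_eq_one (h : IsUmnPair x y) : ⁅x 0, y 0⁆ ^ m = 1 := by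
  simpa using h.fst_add_natCast 0 m

theorem pow_snd_eq_one (h : IsUmnPair x y) : ⁅x 0, y 0⁆ ^ n = 1 := by
  rw [← commutatorElement_inv, inv_pow, h.symm.pow_fst_eq_one, inv_one]

theorem orderOf_dvd_gcd (h : IsUmnPair x y) : orderOf ⁅x 0, y 0⁆ ∣ m.gcd n :=
  Nat.dvd_gcd (orderOf_dvd_of_pow_eq_one h.pow_fst_eq_one)
    (orderOf_dvd_of_pow_eq_one h.pow_snd_eq_one)

theorem commutatorElement_commute_fst (h : IsUmnPair x y) (u : ZMod m) :
    Commute ⁅x 0, y 0⁆ (x u) := by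
  rw [h.commutatorElement_eq_mul_inv]
  exact (h.commute_fst _ u).mul_left (h.commute_fst 0 u).inv_left

theorem commutatorElement_commute_snd (h : IsUmnPair x y) (v : ZMod n) :
    Commute ⁅x 0, y 0⁆ (y v) := by
  rw [← commutatorElement_inv]
  exact (h.symm.commutatorElement_commute_fst v).inv_left

theorem commutator_eq_zpowers (h : IsUmnPair x y)
    (hgen : closure (Set.range x ∪ Set.range y) = ⊤) :
    commutator G = zpowers ⁅x 0, y 0⁆ := by
  have hz : ⁅x 0, y 0⁆ ∈ center G := by
    refine mem_center_of_closure_eq_top hgen ?_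
    rintro _ (⟨u, rfl⟩ | ⟨v, rfl⟩)
    exacts [(h.commutatorElement_commute_fst u).symm, (h.commutatorElement_commute_snd v).symm]
  have := normal_zpowers_of_mem_center hz
  refine le_antisymm (commutator_le_of_closure_eq_top hgen ?_) ?_
  · rintro _ (⟨u, rfl⟩ | ⟨v, rfl⟩) _ (⟨u', rfl⟩ | ⟨v', rfl⟩)
    · rw [commutatorElement_eq_one_iff_commute.2 (h.commute_fst u u')]
      exact one_mem _
    · rw [h.commutatorElement_eq u v']
      exact mem_zpowers _
    · rw [← inv_mem_iff, commutatorElement_inv, h.commutatorElement_eq u' v]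
      exact mem_zpowers _
    · rw [commutatorElement_eq_one_iff_commute.2 (h.commute_snd v v')]
      exact one_mem _
  · exact zpowers_le.2 (commutator_mem_commutator (mem_top _) (mem_top _))

end IsUmnPair

namespace StructureGroup

variable {G : Type*} [Group G] {op : X → X → X}

def of (a : X) : StructureGroup op := PresentedGroup.of a

theorem of_mul_of (a b : X) : (of a * of b : StructureGroup op) = of b * of (op a b) := by
  have h := PresentedGroup.mk_eq_mk_of_mul_inv_mem (rels := structureRels op) ⟨a, b, rfl⟩
  rw [map_mul, map_mul] at h
  exact h

def lift (f : X → G) (hf : ∀ a b, f a * f b = f b * f (op a b)) : StructureGroup op →* G :=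
  PresentedGroup.toGroup (f := f) <| by
    rintro _ ⟨a, b, rfl⟩
    rw [map_mul, map_inv, map_mul, map_mul, FreeGroup.lift_apply_of, FreeGroup.lift_apply_of,
      FreeGroup.lift_apply_of, hf, mul_inv_cancel]

theorem lift_of (f : X → G) (hf : ∀ a b, f a * f b = f b * f (op a b)) (a : X) :
    lift f hf (of a) = f a :=
  PresentedGroup.toGroup.of _

theorem closure_range_of : closure (Set.range (of : X → StructureGroup op)) = ⊤ :=
  PresentedGroup.closure_range_of _

end StructureGroup

namespace Umn

variable (m n : ℕ)

def genFst (u : ZMod m) : StructureGroup (Uop ![m, n]) := StructureGroup.of ⟨0, u⟩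

def genSnd (v : ZMod n) : StructureGroup (Uop ![m, n]) := StructureGroup.of ⟨1, v⟩

theorem isUmnPair_gen : IsUmnPair (genFst m n) (genSnd m n) :=
  ⟨fun _ _ => StructureGroup.of_mul_of _ _, fun _ _ => StructureGroup.of_mul_of _ _,
    fun _ _ => StructureGroup.of_mul_of _ _, fun _ _ => StructureGroup.of_mul_of _ _⟩

theorem closure_range_gen : closure (Set.range (genFst m n) ∪ Set.range (genSnd m n)) = ⊤ := by
  refine eq_top_mono (closure_mono ?_) StructureGroup.closure_range_of
  rintro _ ⟨⟨i, w⟩, rfl⟩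
  fin_cases i
  exacts [.inl ⟨w, rfl⟩, .inr ⟨w, rfl⟩]

variable {m n} {G : Type*} [Group G]

def elim (x : ZMod m → G) (y : ZMod n → G) : (Σ i : Fin 2, ZMod (![m, n] i)) → G
  | ⟨0, u⟩ => x u
  | ⟨1, v⟩ => y v

end Umn

namespace IsUmnPair

variable {G : Type*} [Group G] {m n : ℕ} {x : ZMod m → G} {y : ZMod n → G}

def lift (h : IsUmnPair x y) : StructureGroup (Uop ![m, n]) →* G :=
  StructureGroup.lift (Umn.elim x y) <| by
    rintro ⟨i, a⟩ ⟨j, b⟩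
    fin_cases i <;> fin_cases j
    exacts [h.commute_fst a b, h.fst_mul_snd a b, h.snd_mul_fst b a, h.commute_snd a b]

theorem lift_genFst (h : IsUmnPair x y) (u : ZMod m) : h.lift (Umn.genFst m n u) = x u :=
  StructureGroup.lift_of _ _ _

theorem lift_genSnd (h : IsUmnPair x y) (v : ZMod n) : h.lift (Umn.genSnd m n v) = y v :=
  StructureGroup.lift_of _ _ _

end IsUmnPair

/-- The upper unitriangular matrix `[[1, a, c], [0, 1, b], [0, 0, 1]]` over `R`. -/
@[ext]
structure Heisenberg (R : Type*) where
  a : R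
  b : R
  c : R

namespace Heisenberg

variable {R : Type*} [CommRing R]

instance : Mul (Heisenberg R) := ⟨fun p q => ⟨p.a + q.a, p.b + q.b, p.c + q.c + p.a * q.b⟩⟩
instance : One (Heisenberg R) := ⟨⟨0, 0, 0⟩⟩
instance : Inv (Heisenberg R) := ⟨fun p => ⟨-p.a, -p.b, -p.c + p.a * p.b⟩⟩

@[simp] theorem mul_a (p q : Heisenberg R) : (p * q).a = p.a + q.a := rfl
@[simp] theorem mul_b (p q : Heisenberg R) : (p * q).b = p.b + q.b := rfl
@[simp] theorem mul_c (p q : Heisenberg R) : (p * q).c = p.c + q.c + p.a * q.b := rfl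
@[simp] theorem one_a : (1 : Heisenberg R).a = 0 := rfl
@[simp] theorem one_b : (1 : Heisenberg R).b = 0 := rfl
@[simp] theorem one_c : (1 : Heisenberg R).c = 0 := rfl
@[simp] theorem inv_a (p : Heisenberg R) : p⁻¹.a = -p.a := rfl
@[simp] theorem inv_b (p : Heisenberg R) : p⁻¹.b = -p.b := rfl
@[simp] theorem inv_c (p : Heisenberg R) : p⁻¹.c = -p.c + p.a * p.b := rfl

instance : Group (Heisenberg R) where
  mul_assoc p q r := by ext <;> simp only [mul_a, mul_b, mul_c] <;> ring
  one_mul p := by ext <;> simp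
  mul_one p := by ext <;> simp
  inv_mul_cancel p := by ext <;> simp

def ofCenter : Multiplicative R →* Heisenberg R where
  toFun t := ⟨0, 0, t.toAdd⟩
  map_one' := rfl
  map_mul' s t := by ext <;> simp

theorem ofCenter_injective : Function.Injective (ofCenter : Multiplicative R →* Heisenberg R) :=
  fun _ _ h => congrArg c h

theorem commutatorElement_one_zero_zero_one :
    ⁅(⟨1, 0, 0⟩ : Heisenberg R), (⟨0, 1, 0⟩ : Heisenberg R)⁆ = ofCenter (.ofAdd 1) := by
  ext <;> simp [commutatorElement_def, ofCenter]

theorem isUmnPair {d m n : ℕ} (hm : d ∣ m) (hn : d ∣ n) :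
    IsUmnPair (fun u : ZMod m => (⟨1, 0, ZMod.castHom hm (ZMod d) u⟩ : Heisenberg (ZMod d)))
      (fun v : ZMod n => ⟨0, 1, -ZMod.castHom hn (ZMod d) v⟩) where
  commute_fst _ _ := by ext <;> simp [add_comm]
  commute_snd _ _ := by ext <;> simp [add_comm]
  fst_mul_snd _ _ := by ext <;> simp only [mul_a, mul_b, mul_c, map_add, map_one] <;> ring
  snd_mul_fst _ _ := by ext <;> simp only [mul_a, mul_b, mul_c, map_add, map_one] <;> ring

end Heisenberg

namespace Umn

theorem orderOf_commutatorElement_gen (m n : ℕ) :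
    orderOf ⁅genFst m n 0, genSnd m n 0⁆ = m.gcd n := by
  refine Nat.dvd_antisymm (isUmnPair_gen m n).orderOf_dvd_gcd ?_
  have h := Heisenberg.isUmnPair (Nat.gcd_dvd_left m n) (Nat.gcd_dvd_right m n)
  calc m.gcd n = orderOf (h.lift ⁅genFst m n 0, genSnd m n 0⁆) := by
        rw [map_commutatorElement, h.lift_genFst, h.lift_genSnd, map_zero, map_zero, neg_zero,
          Heisenberg.commutatorElement_one_zero_zero_one,
          orderOf_injective _ Heisenberg.ofCenter_injective, orderOf_ofAdd_eq_addOrderOf,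
          ZMod.addOrderOf_one]
    _ ∣ orderOf ⁅genFst m n 0, genSnd m n 0⁆ := orderOf_map_dvd _ _

end Umn

theorem commutator_structureGroup_Umn_general (m n : ℕ) :
    Nonempty (Additive ↥(commutator (StructureGroup (Uop ![m, n]))) ≃+
      ZMod (Nat.gcd m n)) := by
  rw [(Umn.isUmnPair_gen m n).commutator_eq_zpowers (Umn.closure_range_gen m n),
    ← Umn.orderOf_commutatorElement_gen]
  exact ⟨(Nat.card_zpowers ⁅Umn.genFst m n 0, Umn.genSnd m n 0⁆ ▸
    zmodCyclicMulEquiv inferInstance).symm.toAdditiveLeft⟩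

/-- The commutator subgroup of the structure group of `U_{m,n}` is
cyclic of order `gcd(m,n)`. -/
theorem commutator_structureGroup_Umn (m n : ℕ) (hm : 1 ≤ m) (hn : 1 ≤ n) :
    Nonempty (Additive ↥(commutator (StructureGroup (Uop ![m, n]))) ≃+
      ZMod (Nat.gcd m n)) :=
  commutator_structureGroup_Umn_general m n
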